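/- arXiv:1909.04187 — 5 statements merged into one kernel-verified Lean document; each statement's English description precedes it below -/
import Mathlib

section
/- Let K = ⊕_{g∈G} K_g be a Frobenius G-algebra over a commutative ring k with inner product η and inner product elements η_g⁻ = Σ_i p_i^g ⊗ q_i^g ∈ K_g ⊗ K_{g⁻¹} characterized by a = Σ_i η(a, q_i^g) p_i^g for all a ∈ K_g. Then for any z ∈ K_e, any g,h ∈ G, and any b ∈ K_{g⁻¹}, the equality Σ_i p_i^h ⊗ z q_i^h b = Σ_j b p_j^{gh} ⊗ z q_j^{gh} holds in K_h ⊗ K_{h⁻¹g⁻¹}. -/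
open scoped TensorProduct

/-- A Frobenius `G`-algebra over a commutative ring `k`: a `G`-graded associative unital
`k`-algebra `K = ⊕_{g∈G} K_g` together with a symmetric bilinear form `η` satisfying
`η(ab,c) = η(a,bc)`, nondegenerate on `K_g ⊗ K_{g⁻¹}` and zero on other pairs of components,
with finite inner product elements `Σ_i p_i^g ⊗ q_i^g` characterized by
`a = Σ_i η(a, q_i^g) • p_i^g` for all `a ∈ K_g`. -/
structure FrobeniusGAlgebraData (k G K : Type*) [CommRing k] [Group G] [DecidableEq G]
    [Ring K] [Algebra k K] where
  Kg : G → Submodule k K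
  internal : DirectSum.IsInternal Kg
  one_mem : (1 : K) ∈ Kg 1
  mul_mem : ∀ {g h : G} {a b : K}, a ∈ Kg g → b ∈ Kg h → a * b ∈ Kg (g * h)
  form : K →ₗ[k] K →ₗ[k] k
  form_symm : ∀ a b : K, form a b = form b a
  form_frob : ∀ a b c : K, form (a * b) c = form a (b * c)
  form_orth : ∀ {g h : G} {a b : K}, a ∈ Kg g → b ∈ Kg h → g * h ≠ 1 → form a b = 0
  form_nondeg : ∀ (g : G) (a : K), a ∈ Kg g → (∀ b ∈ Kg g⁻¹, form a b = 0) → a = 0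
  n : G → ℕ
  p : ∀ g : G, Fin (n g) → K
  q : ∀ g : G, Fin (n g) → K
  p_mem : ∀ g i, p g i ∈ Kg g
  q_mem : ∀ g i, q g i ∈ Kg g⁻¹
  char : ∀ (g : G), ∀ a ∈ Kg g, a = ∑ i, form a (q g i) • p g i

variable {k G K : Type*} [CommRing k] [Group G] [DecidableEq G] [Ring K] [Algebra k K]

/-- The projection `Ψ(a) = Σ_i p_i^e a q_i^e`. -/
def FrobeniusGAlgebraData.Psi (F : FrobeniusGAlgebraData k G K) (a : K) : K :=
  ∑ i, F.p 1 i * a * F.q 1 i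

/-- The map `φ_g(a) = Σ_i p_i^g a z q_i^g`. -/
def FrobeniusGAlgebraData.phi (F : FrobeniusGAlgebraData k G K) (z : K) (g : G) (a : K) : K :=
  ∑ i, F.p g i * a * z * F.q g i


/-- Dual characterization: for `a ∈ K_{g⁻¹}`, `a = Σ_i η(p_i^g, a) • q_i^g`. -/
theorem FrobeniusGAlgebraData.dual_char (F : FrobeniusGAlgebraData k G K)
    (g : G) (a : K) (ha : a ∈ F.Kg g⁻¹) :
    a = ∑ i, F.form (F.p g i) a • F.q g i := by
  have hd : a - ∑ i, F.form (F.p g i) a • F.q g i ∈ F.Kg g⁻¹ :=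
    Submodule.sub_mem _ ha (Submodule.sum_mem _ fun i _ =>
      Submodule.smul_mem _ _ (F.q_mem g i))
  have h0 := F.form_nondeg g⁻¹ _ hd ?_
  · exact (sub_eq_zero.mp h0)
  · intro c hc
    have hc' : c ∈ F.Kg g := by rwa [inv_inv] at hc
    have hcc := F.char g c hc'
    have h1 : F.form a c = ∑ i, F.form c (F.q g i) * F.form (F.p g i) a := by
      rw [F.form_symm a c]
      conv_lhs => rw [hcc]
      simp [map_sum, LinearMap.sum_apply, LinearMap.map_smul, LinearMap.smul_apply,
        smul_eq_mul]
    have h2 : F.form (∑ i, F.form (F.p g i) a • F.q g i) c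
        = ∑ i, F.form c (F.q g i) * F.form (F.p g i) a := by
      simp only [map_sum, LinearMap.sum_apply, LinearMap.map_smul, LinearMap.smul_apply,
        smul_eq_mul]
      exact Finset.sum_congr rfl fun i _ => by rw [F.form_symm (F.q g i) c]; ring
    rw [map_sub, LinearMap.sub_apply, h1, h2, sub_self]

/-- Lemma 4.3 (first part): for a Frobenius `G`-algebra `K`, any `z ∈ K_e`, `g h ∈ G`
and `b ∈ K_{g⁻¹}`, one has `Σ_i p_i^h ⊗ z q_i^h b = Σ_j b p_j^{gh} ⊗ z q_j^{gh}`
in `K_h ⊗ K_{h⁻¹g⁻¹}` (stated in `K ⊗[k] K`). -/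
theorem frobenius_inner_product_shift
    (F : FrobeniusGAlgebraData k G K)
    (z : K) (hz : z ∈ F.Kg 1)
    (g h : G) (b : K) (hb : b ∈ F.Kg g⁻¹) :
    ∑ i, F.p h i ⊗ₜ[k] (z * F.q h i * b)
      = ∑ j, (b * F.p (g * h) j) ⊗ₜ[k] (z * F.q (g * h) j) := by
  have hbp : ∀ j, b * F.p (g * h) j ∈ F.Kg h := fun j => by
    have := F.mul_mem hb (F.p_mem (g * h) j)
    rwa [inv_mul_cancel_left] at this
  have hqb : ∀ i, F.q h i * b ∈ F.Kg (g * h)⁻¹ := fun i => by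
    have := F.mul_mem (F.q_mem h i) hb
    rwa [← mul_inv_rev] at this
  have coef : ∀ i j, F.form (b * F.p (g * h) j) (F.q h i)
      = F.form (F.p (g * h) j) (F.q h i * b) := fun i j => by
    rw [F.form_frob, F.form_symm, F.form_frob]
  have expand_left : ∀ i, F.q h i * b
      = ∑ j, F.form (F.p (g * h) j) (F.q h i * b) • F.q (g * h) j :=
    fun i => F.dual_char (g * h) _ (hqb i)
  have expand_right : ∀ j, b * F.p (g * h) j
      = ∑ i, F.form (F.p (g * h) j) (F.q h i * b) • F.p h i := fun j => by
    conv_lhs => rw [F.char h _ (hbp j)]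
    exact Finset.sum_congr rfl fun i _ => by rw [coef]
  calc ∑ i, F.p h i ⊗ₜ[k] (z * F.q h i * b)
      = ∑ i, ∑ j, F.form (F.p (g * h) j) (F.q h i * b)
          • (F.p h i ⊗ₜ[k] (z * F.q (g * h) j)) := by
        refine Finset.sum_congr rfl fun i _ => ?_
        rw [mul_assoc]
        conv_lhs => rw [expand_left i, Finset.mul_sum, TensorProduct.tmul_sum]
        exact Finset.sum_congr rfl fun j _ => by
          rw [mul_smul_comm, TensorProduct.tmul_smul]
    _ = ∑ j, ∑ i, F.form (F.p (g * h) j) (F.q h i * b)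
          • (F.p h i ⊗ₜ[k] (z * F.q (g * h) j)) := Finset.sum_comm
    _ = ∑ j, (b * F.p (g * h) j) ⊗ₜ[k] (z * F.q (g * h) j) := by
        refine Finset.sum_congr rfl fun j _ => ?_
        rw [expand_right j, TensorProduct.sum_tmul]
        exact Finset.sum_congr rfl fun i _ => by
          rw [TensorProduct.smul_tmul']
end

section
/- Let K = ⊕_{g∈G} K_g be a Frobenius G-algebra with inner product elements {Σ_i p_i^g ⊗ q_i^g}_{g∈G}, and let z ∈ K_e. Then for any b ∈ K, any g,h ∈ G, and any c ∈ K_{h⁻¹}, the identity Σ_j p_j^g b z q_j^g c = Σ_k c p_k^{hg} b z q_k^{hg} holds. -/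
open scoped TensorProduct

variable {k G K : Type*} [CommRing k] [Group G] [DecidableEq G] [Ring K] [Algebra k K]

/-- Lemma 4.3 (second part): `Σ_j p_j^g b z q_j^g c = Σ_k c p_k^{hg} b z q_k^{hg}`
for any `b ∈ K`, `g h ∈ G` and `c ∈ K_{h⁻¹}`. -/
theorem frobenius_inner_product_cyclic
    (F : FrobeniusGAlgebraData k G K)
    (z : K) (hz : z ∈ F.Kg 1)
    (b : K) (g h : G) (c : K) (hc : c ∈ F.Kg h⁻¹) :
    ∑ j, F.p g j * b * z * F.q g j * c
      = ∑ i, c * (F.p (h * g) i * b * z * F.q (h * g) i) := by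
  have hqc : ∀ j, F.q g j * c ∈ F.Kg (h * g)⁻¹ := by
    intro j
    have := F.mul_mem (F.q_mem g j) hc
    rwa [show g⁻¹ * h⁻¹ = (h * g)⁻¹ by group] at this
  have hcp : ∀ i, c * F.p (h * g) i ∈ F.Kg g := by
    intro i
    have := F.mul_mem hc (F.p_mem (h * g) i)
    rwa [show h⁻¹ * (h * g) = g by group] at this
  have hscal : ∀ i j, F.form (F.p (h * g) i) (F.q g j * c)
      = F.form (c * F.p (h * g) i) (F.q g j) := by
    intro i j
    rw [← F.form_frob, F.form_symm (F.p (h * g) i * F.q g j) c,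
      ← F.form_frob]
  calc
    ∑ j, F.p g j * b * z * F.q g j * c
        = ∑ j, F.p g j * b * z * (F.q g j * c) := by
          simp [mul_assoc]
    _ = ∑ j, F.p g j * b * z * (∑ i, F.form (F.p (h * g) i) (F.q g j * c) • F.q (h * g) i) := by
          refine Finset.sum_congr rfl fun j _ => ?_
          rw [← F.dual_char (h * g) _ (hqc j)]
    _ = ∑ j, ∑ i, F.form (F.p (h * g) i) (F.q g j * c) • (F.p g j * b * z * F.q (h * g) i) := by
          simp [Finset.mul_sum, mul_smul_comm]
    _ = ∑ i, ∑ j, F.form (c * F.p (h * g) i) (F.q g j) • (F.p g j * b * z * F.q (h * g) i) := by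
          rw [Finset.sum_comm]
          simp [hscal]
    _ = ∑ i, (∑ j, F.form (c * F.p (h * g) i) (F.q g j) • F.p g j) * b * z * F.q (h * g) i := by
          simp [Finset.sum_mul, smul_mul_assoc]
    _ = ∑ i, c * (F.p (h * g) i * b * z * F.q (h * g) i) := by
          refine Finset.sum_congr rfl fun i _ => ?_
          rw [← F.char g _ (hcp i)]
          simp [mul_assoc]
end

section
/- Let (K, η) be a quasi-biangular G-algebra with central element z and inner product elements {Σ_i p_i^g ⊗ q_i^g}_{g∈G}. For each g ∈ G define φ_g : K → K by φ_g(a) = Σ_i p_i^g a z q_i^g. Then φ_g(φ_h(Ψ(b))) = φ_{gh}(Ψ(b)) for all g, h ∈ G and b ∈ K, where Ψ(a) = Σ_i p_i^e a q_i^e; in particular φ_{g⁻¹} is the inverse of φ_g on the G-center Z_G(K). -/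
open scoped TensorProduct

variable {k G K : Type*} [CommRing k] [Group G] [DecidableEq G] [Ring K] [Algebra k K]

namespace FrobeniusGAlgebraData

variable (F : FrobeniusGAlgebraData k G K)

/-- Dual characterization on the `q` side: for `b ∈ K_{g⁻¹}`,
`b = ∑ i, η(p_i^g, b) • q_i^g`. -/
lemma qchar (g : G) (b : K) (hb : b ∈ F.Kg g⁻¹) :
    b = ∑ i, F.form (F.p g i) b • F.q g i := by
  have hsum : (∑ i, F.form (F.p g i) b • F.q g i) ∈ F.Kg g⁻¹ :=
    Submodule.sum_mem _ fun i _ => Submodule.smul_mem _ _ (F.q_mem g i)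
  have h0 : b - ∑ i, F.form (F.p g i) b • F.q g i = 0 := by
    refine F.form_nondeg g⁻¹ _ (sub_mem hb hsum) ?_
    intro a ha
    rw [inv_inv] at ha
    have hchar := F.char g a ha
    have h1 : F.form b a = ∑ i, F.form (F.p g i) b * F.form (F.q g i) a := by
      rw [F.form_symm b a]
      conv_lhs => rw [hchar]
      simp only [map_sum, map_smul, LinearMap.sum_apply, LinearMap.smul_apply, smul_eq_mul]
      refine Finset.sum_congr rfl fun i _ => ?_
      rw [F.form_symm a (F.q g i), F.form_symm (F.p g i) b]
      ring
    simp only [map_sub, map_sum, map_smul, LinearMap.sub_apply, LinearMap.sum_apply,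
      LinearMap.smul_apply, smul_eq_mul, h1]
    ring_nf
  exact (sub_eq_zero.mp h0)

/-- The sliding lemma: for `x ∈ K_h`,
`∑ i, p_i^g x c q_i^g = ∑ m, p_m^{gh} c (x q_m^{gh})`. -/
lemma slide (g h : G) (x : K) (hx : x ∈ F.Kg h) (c : K) :
    ∑ i, F.p g i * x * c * F.q g i
      = ∑ m, F.p (g * h) m * c * (x * F.q (g * h) m) := by
  have hxq : ∀ m, x * F.q (g * h) m ∈ F.Kg g⁻¹ := by
    intro m
    have := F.mul_mem hx (F.q_mem (g * h) m)
    rwa [mul_inv_rev, mul_inv_cancel_left] at this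
  calc ∑ i, F.p g i * x * c * F.q g i
      = ∑ i, (∑ m, F.form (F.p g i * x) (F.q (g * h) m) • F.p (g * h) m) * c * F.q g i := by
        refine Finset.sum_congr rfl fun i _ => ?_
        rw [← F.char (g * h) (F.p g i * x) (F.mul_mem (F.p_mem g i) hx)]
    _ = ∑ i, ∑ m, F.form (F.p g i) (x * F.q (g * h) m) • (F.p (g * h) m * c * F.q g i) := by
        refine Finset.sum_congr rfl fun i _ => ?_
        rw [Finset.sum_mul, Finset.sum_mul]
        refine Finset.sum_congr rfl fun m _ => ?_
        rw [smul_mul_assoc, smul_mul_assoc, F.form_frob]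
    _ = ∑ m, F.p (g * h) m * c * (∑ i, F.form (F.p g i) (x * F.q (g * h) m) • F.q g i) := by
        rw [Finset.sum_comm]
        refine Finset.sum_congr rfl fun m _ => ?_
        rw [Finset.mul_sum]
        refine Finset.sum_congr rfl fun i _ => ?_
        rw [mul_smul_comm]
    _ = ∑ m, F.p (g * h) m * c * (x * F.q (g * h) m) := by
        refine Finset.sum_congr rfl fun m _ => ?_
        rw [← F.qchar g _ (hxq m)]

/-- The biangularity condition also holds with `p` and `q` swapped. -/
lemma qzp (z : K) (hbiang : ∀ g : G, ∑ i, F.p g i * z * F.q g i = 1) (h : G) :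
    ∑ j, F.q h j * z * F.p h j = 1 := by
  calc ∑ j, F.q h j * z * F.p h j
      = ∑ j, (∑ i, F.form (F.q h j) (F.q h⁻¹ i) • F.p h⁻¹ i) * z * F.p h j := by
        refine Finset.sum_congr rfl fun j _ => ?_
        rw [← F.char h⁻¹ (F.q h j) (F.q_mem h j)]
    _ = ∑ j, ∑ i, F.form (F.q h j) (F.q h⁻¹ i) • (F.p h⁻¹ i * z * F.p h j) := by
        refine Finset.sum_congr rfl fun j _ => ?_
        rw [Finset.sum_mul, Finset.sum_mul]
        refine Finset.sum_congr rfl fun i _ => ?_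
        rw [smul_mul_assoc, smul_mul_assoc]
    _ = ∑ i, F.p h⁻¹ i * z * (∑ j, F.form (F.q h⁻¹ i) (F.q h j) • F.p h j) := by
        rw [Finset.sum_comm]
        refine Finset.sum_congr rfl fun i _ => ?_
        rw [Finset.mul_sum]
        refine Finset.sum_congr rfl fun j _ => ?_
        rw [mul_smul_comm, F.form_symm]
    _ = ∑ i, F.p h⁻¹ i * z * F.q h⁻¹ i := by
        refine Finset.sum_congr rfl fun i _ => ?_
        have hmem : F.q h⁻¹ i ∈ F.Kg h := by
          have := F.q_mem h⁻¹ i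
          rwa [inv_inv] at this
        rw [← F.char h (F.q h⁻¹ i) hmem]
    _ = 1 := hbiang h⁻¹

/-- `φ_g ∘ φ_h = φ_{gh}` everywhere. -/
lemma phi_phi (z : K) (hbiang : ∀ g : G, ∑ i, F.p g i * z * F.q g i = 1)
    (g h : G) (c : K) :
    F.phi z g (F.phi z h c) = F.phi z (g * h) c := by
  unfold phi
  calc ∑ i, F.p g i * (∑ j, F.p h j * c * z * F.q h j) * z * F.q g i
      = ∑ i, ∑ j, F.p g i * F.p h j * (c * z * F.q h j * z) * F.q g i := by
        refine Finset.sum_congr rfl fun i _ => ?_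
        rw [Finset.mul_sum, Finset.sum_mul, Finset.sum_mul]
        refine Finset.sum_congr rfl fun j _ => ?_
        simp only [mul_assoc]
    _ = ∑ j, ∑ i, F.p g i * F.p h j * (c * z * F.q h j * z) * F.q g i := Finset.sum_comm
    _ = ∑ j, ∑ m, F.p (g * h) m * (c * z * F.q h j * z) * (F.p h j * F.q (g * h) m) := by
        refine Finset.sum_congr rfl fun j _ => ?_
        exact F.slide g h (F.p h j) (F.p_mem h j) (c * z * F.q h j * z)
    _ = ∑ m, F.p (g * h) m * (c * z) * ((∑ j, F.q h j * z * F.p h j) * F.q (g * h) m) := by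
        rw [Finset.sum_comm]
        refine Finset.sum_congr rfl fun m _ => ?_
        rw [Finset.sum_mul, Finset.mul_sum]
        refine Finset.sum_congr rfl fun j _ => ?_
        simp only [mul_assoc]
    _ = ∑ m, F.p (g * h) m * c * z * F.q (g * h) m := by
        refine Finset.sum_congr rfl fun m _ => ?_
        rw [F.qzp z hbiang h, one_mul]
        simp only [mul_assoc]

/-- `φ_1` is the identity on the image of `Ψ`. -/
lemma phi_one_Psi (z : K) (hbiang : ∀ g : G, ∑ i, F.p g i * z * F.q g i = 1)
    (b : K) : F.phi z 1 (F.Psi b) = F.Psi b := by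
  unfold phi Psi
  calc ∑ i, F.p 1 i * (∑ j, F.p 1 j * b * F.q 1 j) * z * F.q 1 i
      = ∑ i, ∑ j, F.p 1 i * F.p 1 j * (b * F.q 1 j * z) * F.q 1 i := by
        refine Finset.sum_congr rfl fun i _ => ?_
        rw [Finset.mul_sum, Finset.sum_mul, Finset.sum_mul]
        refine Finset.sum_congr rfl fun j _ => ?_
        simp only [mul_assoc]
    _ = ∑ j, ∑ i, F.p 1 i * F.p 1 j * (b * F.q 1 j * z) * F.q 1 i := Finset.sum_comm
    _ = ∑ j, ∑ m, F.p ((1 : G) * 1) m * (b * F.q 1 j * z) * (F.p 1 j * F.q ((1 : G) * 1) m) := by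
        refine Finset.sum_congr rfl fun j _ => ?_
        exact F.slide 1 1 (F.p 1 j) (F.p_mem 1 j) (b * F.q 1 j * z)
    _ = ∑ j, ∑ m, F.p (1 : G) m * (b * F.q 1 j * z) * (F.p 1 j * F.q (1 : G) m) := by
        rw [show ((1 : G) * 1) = 1 from one_mul 1]
    _ = ∑ m, F.p (1 : G) m * b * ((∑ j, F.q 1 j * z * F.p 1 j) * F.q (1 : G) m) := by
        rw [Finset.sum_comm]
        refine Finset.sum_congr rfl fun m _ => ?_
        rw [Finset.sum_mul, Finset.mul_sum]
        refine Finset.sum_congr rfl fun j _ => ?_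
        simp only [mul_assoc]
    _ = ∑ m, F.p 1 m * b * F.q 1 m := by
        refine Finset.sum_congr rfl fun m _ => ?_
        rw [F.qzp z hbiang 1, one_mul]

end FrobeniusGAlgebraData

/-- `φ_g ∘ φ_h = φ_{gh}` on the G-center; in particular `φ_{g⁻¹}` is the inverse of
`φ_g` on `Z_G(K)`. -/
theorem quasiBiangular_phi_comp
    (F : FrobeniusGAlgebraData k G K)
    (z : K) (hz : z ∈ F.Kg 1)
    (hzcentral : ∀ a ∈ F.Kg 1, z * a = a * z)
    (hbiang : ∀ g : G, ∑ i, F.p g i * z * F.q g i = 1)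
    (hstrong : ∀ g h : G, F.Kg g * F.Kg h = F.Kg (g * h))
    (g h : G) :
    (∀ b : K, F.phi z g (F.phi z h (F.Psi b)) = F.phi z (g * h) (F.Psi b)) ∧
    (∀ a : K, F.phi z g⁻¹ (F.phi z g (F.Psi a)) = F.Psi a ∧
      F.phi z g (F.phi z g⁻¹ (F.Psi a)) = F.Psi a) := by
  refine ⟨fun b => F.phi_phi z hbiang g h (F.Psi b), fun a => ⟨?_, ?_⟩⟩
  · have h1 := F.phi_phi z hbiang g⁻¹ g (F.Psi a)
    rw [inv_mul_cancel] at h1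
    rw [h1, F.phi_one_Psi z hbiang a]
  · have h1 := F.phi_phi z hbiang g g⁻¹ (F.Psi a)
    rw [mul_inv_cancel] at h1
    rw [h1, F.phi_one_Psi z hbiang a]
end

section
/- Let G be a group and K = ⊕_{g∈G} K_g a strongly graded G-algebra over a commutative ring k. Then for every g ∈ G there exists a finite element Σ_j β_g^j ⊗ β_{g⁻¹}^j ∈ K_g ⊗_{K_e} K_{g⁻¹} whose image under the multiplication map is 1 ∈ K_e, and moreover for any two such elements Σ_j β_g^j ⊗ β_{g⁻¹}^j and Σ_l γ_g^l ⊗ γ_{g⁻¹}^l, and any central element c of K_e, one has Σ_j β_g^j c β_{g⁻¹}^j = Σ_l γ_g^l c γ_{g⁻¹}^l. -/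
/-- For a strongly graded `G`-algebra `K`, for every `g ∈ G` the unit `1 ∈ K_e` can be
written as a finite sum `Σ_j β_g^j β_{g⁻¹}^j` with `β_g^j ∈ K_g`, `β_{g⁻¹}^j ∈ K_{g⁻¹}`;
moreover for any central element `c` of `K_e`, the element `Σ_j β_g^j c β_{g⁻¹}^j` is
independent of the choice of such a decomposition of `1`. -/
theorem strongly_graded_unit_decomposition
    {k G K : Type*} [CommRing k] [Group G] [Ring K] [Algebra k K]
    (Kg : G → Submodule k K)
    (hK1 : (1 : K) ∈ Kg 1)
    (hmul : ∀ {g h : G} {a b : K}, a ∈ Kg g → b ∈ Kg h → a * b ∈ Kg (g * h))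
    (hstrong : ∀ g h : G, Kg g * Kg h = Kg (g * h)) :
    ∀ g : G,
      (∃ (N : ℕ) (β : Fin N → K) (β' : Fin N → K),
          (∀ j, β j ∈ Kg g) ∧ (∀ j, β' j ∈ Kg g⁻¹) ∧ ∑ j, β j * β' j = 1) ∧
      (∀ (N M : ℕ) (β : Fin N → K) (β' : Fin N → K) (γ : Fin M → K) (γ' : Fin M → K),
          (∀ j, β j ∈ Kg g) → (∀ j, β' j ∈ Kg g⁻¹) → (∑ j, β j * β' j) = 1 →
          (∀ l, γ l ∈ Kg g) → (∀ l, γ' l ∈ Kg g⁻¹) → (∑ l, γ l * γ' l) = 1 →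
          ∀ c ∈ Kg 1, (∀ a ∈ Kg 1, c * a = a * c) →
            ∑ j, β j * c * β' j = ∑ l, γ l * c * γ' l) := by
  intro g
  constructor
  · -- existence
    have h1 : (1 : K) ∈ Kg g * Kg g⁻¹ := by
      rw [hstrong, mul_inv_cancel]; exact hK1
    refine Submodule.mul_induction_on h1 ?_ ?_
    · intro m hm n hn
      exact ⟨1, fun _ => m, fun _ => n, fun _ => hm, fun _ => hn, by simp⟩
    · rintro x y ⟨N, β, β', hβ, hβ', hsum⟩ ⟨M, γ, γ', hγ, hγ', hsum'⟩
      refine ⟨N + M, Fin.append β γ, Fin.append β' γ', ?_, ?_, ?_⟩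
      · intro j
        refine Fin.addCases (fun i => ?_) (fun i => ?_) j <;>
          simp [Fin.append_left, Fin.append_right, hβ, hγ]
      · intro j
        refine Fin.addCases (fun i => ?_) (fun i => ?_) j <;>
          simp [Fin.append_left, Fin.append_right, hβ', hγ']
      · rw [Fin.sum_univ_add]
        simp [Fin.append_left, Fin.append_right, hsum, hsum']
  · intro N M β β' γ γ' hβ hβ' hβsum hγ hγ' hγsum c hc hcomm
    have key : ∀ j l, β j * c * β' j * (γ l * γ' l) = β j * β' j * (γ l * c * γ' l) := by
      intro j l
      have h1 : β' j * γ l ∈ Kg 1 := by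
        have := hmul (hβ' j) (hγ l)
        simpa using this
      have h2 := hcomm _ h1
      calc β j * c * β' j * (γ l * γ' l)
          = β j * (c * (β' j * γ l)) * γ' l := by noncomm_ring
        _ = β j * ((β' j * γ l) * c) * γ' l := by rw [h2]
        _ = β j * β' j * (γ l * c * γ' l) := by noncomm_ring
    calc ∑ j, β j * c * β' j
        = ∑ j, β j * c * β' j * (∑ l, γ l * γ' l) := by rw [hγsum]; simp
      _ = ∑ j, ∑ l, β j * c * β' j * (γ l * γ' l) := by
          simp [Finset.mul_sum]
      _ = ∑ l, ∑ j, β j * β' j * (γ l * c * γ' l) := by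
          rw [Finset.sum_comm]
          simp only [key]
      _ = ∑ l, (∑ j, β j * β' j) * (γ l * c * γ' l) := by
          simp [Finset.sum_mul]
      _ = ∑ l, γ l * c * γ' l := by rw [hβsum]; simp
end

section
/- Let (K, η) be a quasi-biangular G-algebra with central element z. Define Ψ(a) = Σ_i p_i^e a q_i^e and for each g ∈ G, φ_g(a) = Σ_i p_i^g a z q_i^g. Then Ψ(z·φ_h(b)) = φ_h(b) for all b ∈ K and h ∈ G; in particular the image of each φ_h is contained in the G-center Z_G(K) = ⊕_{g∈G} Ψ(K_g). Moreover φ_e restricted to Z_G(K) is the identity: φ_e(Ψ(a)) = Ψ(a) for all a ∈ K. -/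
open scoped TensorProduct

variable {k G K : Type*} [CommRing k] [Group G] [DecidableEq G] [Ring K] [Algebra k K]

namespace FrobeniusGAlgebraData

/-- Dual expansion: for `x ∈ K_{g⁻¹}`, `x = Σ_i η(p_i^g, x) • q_i^g`. -/
lemma char' (F : FrobeniusGAlgebraData k G K) (g : G) (x : K) (hx : x ∈ F.Kg g⁻¹) :
    x = ∑ i, F.form (F.p g i) x • F.q g i := by
  have hy : x - ∑ i, F.form (F.p g i) x • F.q g i ∈ F.Kg g⁻¹ :=
    Submodule.sub_mem _ hx
      (Submodule.sum_mem _ fun i _ => Submodule.smul_mem _ _ (F.q_mem g i))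
  have hzero : ∀ b ∈ F.Kg g⁻¹⁻¹,
      F.form (x - ∑ i, F.form (F.p g i) x • F.q g i) b = 0 := by
    intro b hb
    rw [inv_inv] at hb
    have hbchar := F.char g b hb
    have h1 : F.form x b = ∑ i, F.form (F.p g i) x * F.form (F.q g i) b := by
      rw [F.form_symm x b]
      conv_lhs => rw [hbchar]
      simp only [map_sum, map_smul, LinearMap.sum_apply, LinearMap.smul_apply,
        smul_eq_mul]
      refine Finset.sum_congr rfl fun i _ => ?_
      rw [F.form_symm b (F.q g i), mul_comm]
    simp only [map_sub, map_sum, map_smul, LinearMap.sub_apply, LinearMap.sum_apply,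
      LinearMap.smul_apply, smul_eq_mul]
    rw [h1, sub_self]
  have := F.form_nondeg g⁻¹ _ hy hzero
  exact (sub_eq_zero.mp this)

/-- Frobenius rearrangement: for `x ∈ K_1`,
`Σ_i (x p_i^g) a q_i^g = Σ_i p_i^g a (q_i^g x)`. -/
lemma swap (F : FrobeniusGAlgebraData k G K) (g : G) (x : K) (hx : x ∈ F.Kg 1) (a : K) :
    ∑ i, x * F.p g i * a * F.q g i = ∑ i, F.p g i * a * (F.q g i * x) := by
  have hcoef : ∀ i j, F.form (x * F.p g i) (F.q g j) = F.form (F.p g i) (F.q g j * x) := by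
    intro i j
    rw [F.form_frob, F.form_symm, F.form_frob]
  calc ∑ i, x * F.p g i * a * F.q g i
      = ∑ i, ∑ j, F.form (x * F.p g i) (F.q g j) • (F.p g j * a * F.q g i) := by
        refine Finset.sum_congr rfl fun i _ => ?_
        have hm : x * F.p g i ∈ F.Kg g := by
          simpa using F.mul_mem hx (F.p_mem g i)
        conv_lhs => rw [F.char g _ hm]
        rw [Finset.sum_mul, Finset.sum_mul]
        refine Finset.sum_congr rfl fun j _ => ?_
        rw [smul_mul_assoc, smul_mul_assoc]
    _ = ∑ i, ∑ j, F.form (F.p g i) (F.q g j * x) • (F.p g j * a * F.q g i) :=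
        Finset.sum_congr rfl fun i _ => Finset.sum_congr rfl fun j _ => by
          rw [hcoef i j]
    _ = ∑ i, ∑ j, F.form (F.p g j) (F.q g i * x) • (F.p g i * a * F.q g j) :=
        Finset.sum_comm
    _ = ∑ i, F.p g i * a * (F.q g i * x) := by
        refine Finset.sum_congr rfl fun i _ => ?_
        have hm : F.q g i * x ∈ F.Kg g⁻¹ := by
          simpa using F.mul_mem (F.q_mem g i) hx
        conv_rhs => rw [F.char' g _ hm]
        rw [Finset.mul_sum]
        refine Finset.sum_congr rfl fun j _ => ?_
        rw [mul_smul_comm, mul_assoc]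

/-- Elements of `K_1` commute with `Σ_i p_i^g a q_i^g` for any `a`. -/
lemma commute_T (F : FrobeniusGAlgebraData k G K) (g : G) (x : K) (hx : x ∈ F.Kg 1)
    (a : K) :
    x * ∑ i, F.p g i * a * F.q g i = (∑ i, F.p g i * a * F.q g i) * x := by
  rw [Finset.mul_sum, Finset.sum_mul]
  have hs := F.swap g x hx a
  simp only [mul_assoc] at hs ⊢
  exact hs

end FrobeniusGAlgebraData

/-- `Ψ(z φ_h(b)) = φ_h(b)`, so the image of each `φ_h` lies in the G-center
`Z_G(K) = ⊕_g Ψ(K_g)`; moreover `φ_e` restricts to the identity on `Z_G(K)`. -/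
theorem quasiBiangular_phi_image_in_center
    (F : FrobeniusGAlgebraData k G K)
    (z : K) (hz : z ∈ F.Kg 1)
    (hzcentral : ∀ a ∈ F.Kg 1, z * a = a * z)
    (hbiang : ∀ g : G, ∑ i, F.p g i * z * F.q g i = 1)
    (hstrong : ∀ g h : G, F.Kg g * F.Kg h = F.Kg (g * h))
    (h : G) :
    (∀ b : K, F.Psi (z * F.phi z h b) = F.phi z h b) ∧
    (∀ (g₀ : G), ∀ b ∈ F.Kg g₀, F.phi z h b ∈ F.Psi '' (F.Kg (h * g₀ * h⁻¹))) ∧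
    (∀ a : K, F.phi z 1 (F.Psi a) = F.Psi a) := by
  have hq1 : ∀ i, F.q 1 i ∈ F.Kg 1 := fun i => by simpa using F.q_mem 1 i
  -- φ_h(b) commutes with every element of K_1
  have hcomm : ∀ (x : K), x ∈ F.Kg 1 → ∀ b : K,
      x * F.phi z h b = F.phi z h b * x := by
    intro x hx b
    have := F.commute_T h x hx (b * z)
    simp only [FrobeniusGAlgebraData.phi, mul_assoc] at this ⊢
    exact this
  have part1 : ∀ b : K, F.Psi (z * F.phi z h b) = F.phi z h b := by
    intro b
    have key : ∀ i : Fin (F.n 1), F.p 1 i * (z * F.phi z h b) * F.q 1 i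
        = F.p 1 i * z * F.q 1 i * F.phi z h b := by
      intro i
      have hc := hcomm (F.q 1 i) (hq1 i) b
      simp only [mul_assoc]
      rw [← hc]
    calc F.Psi (z * F.phi z h b)
        = ∑ i, F.p 1 i * z * F.q 1 i * F.phi z h b :=
          Finset.sum_congr rfl fun i _ => key i
      _ = (∑ i, F.p 1 i * z * F.q 1 i) * F.phi z h b := by rw [Finset.sum_mul]
      _ = F.phi z h b := by rw [hbiang 1, one_mul]
  refine ⟨part1, ?_, ?_⟩
  · intro g₀ b hb
    have hmem : F.phi z h b ∈ F.Kg (h * g₀ * h⁻¹) := by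
      refine Submodule.sum_mem _ fun i _ => ?_
      have := F.mul_mem (F.mul_mem (F.mul_mem (F.p_mem h i) hb) hz) (F.q_mem h i)
      simpa using this
    refine ⟨z * F.phi z h b, ?_, part1 b⟩
    have := F.mul_mem hz hmem
    simpa using this
  · intro a
    have hzc : F.Psi a * z = z * F.Psi a := (F.commute_T 1 z hz a).symm
    have hqc : ∀ i, F.Psi a * F.q 1 i = F.q 1 i * F.Psi a := fun i =>
      (F.commute_T 1 (F.q 1 i) (hq1 i) a).symm
    calc F.phi z 1 (F.Psi a)
        = ∑ i, F.p 1 i * z * F.q 1 i * F.Psi a := by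
          refine Finset.sum_congr rfl fun i _ => ?_
          show F.p 1 i * F.Psi a * z * F.q 1 i = F.p 1 i * z * F.q 1 i * F.Psi a
          simp only [mul_assoc]
          rw [← mul_assoc (F.Psi a) z (F.q 1 i), hzc, mul_assoc, hqc i]
      _ = (∑ i, F.p 1 i * z * F.q 1 i) * F.Psi a := by rw [Finset.sum_mul]
      _ = F.Psi a := by rw [hbiang 1, one_mul]
end
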